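/- Let N ≥ 1 and let q be an integer with K = gcd(N, q) > 1, and let p be a prime dividing N/K. Let n ∈ ℤ^N and define the folded coefficients y_l = Σ_{k=0}^{K-1} n_{l + k·(N/K)} for 0 ≤ l < N/K. If y_l = y_{l mod (N/(Kp))} for all 0 ≤ l < N/K, then Σ_{j=0}^{N-1} n_j · exp(-2πi q j / N) = 0. -/

import Mathlib

/-- Extension of a vector indexed by `Fin N` to all of `ℕ`, by zero. -/
def pad {N : ℕ} {α : Type*} [Zero α] (n : Fin N → α) : ℕ → α :=
  fun k => if h : k < N then n ⟨k, h⟩ else 0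

/-!
Write `M = N / K` and `q = K q'`. Then `ω = exp(-2πi q / N) = exp(-2πi q' / M)` is a primitive
`M`-th root of unity, because `q'` is coprime to `M`. Since `ω ^ M = 1`, the sum `∑ n_j ω^j`
folds to `∑_{l < M} y_l ω^l`. Writing `M = p m`, the periodicity of `y` factors this as
`(∑_{s < p} (ω^m)^s) (∑_{r < m} y_r ω^r)`, and the first factor vanishes because `ω^m` is a
primitive `p`-th root of unity with `p > 1`.
-/

open Finset

theorem sum_range_mul_eq_sum_sum {β : Type*} [AddCommMonoid β] (f : ℕ → β) (a b : ℕ) :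
    ∑ j ∈ range (a * b), f j = ∑ k ∈ range a, ∑ l ∈ range b, f (l + k * b) := by
  induction a with
  | zero => simp
  | succ a ih =>
    rw [Nat.succ_mul, sum_range_add, ih, sum_range_succ]
    simp only [Nat.add_comm]

theorem sum_range_mul_pow_eq_sum_fold {R : Type*} [CommSemiring R] {ω : R} {M : ℕ}
    (hω : ω ^ M = 1) (f : ℕ → R) (K : ℕ) :
    ∑ j ∈ range (K * M), f j * ω ^ j = ∑ l ∈ range M, (∑ k ∈ range K, f (l + k * M)) * ω ^ l := by
  rw [sum_range_mul_eq_sum_sum, sum_comm]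
  refine sum_congr rfl fun l _ => ?_
  rw [sum_mul]
  refine sum_congr rfl fun k _ => ?_
  rw [pow_add, Nat.mul_comm k M, pow_mul, hω, one_pow, mul_one]

theorem IsPrimitiveRoot.sum_range_mul_pow_eq_zero_of_periodic {R : Type*} [CommRing R]
    [IsDomain R] {ζ : R} {p m : ℕ} (hζ : IsPrimitiveRoot ζ (p * m)) (hp : 1 < p) (f : ℕ → R)
    (hf : ∀ l < p * m, f l = f (l % m)) :
    ∑ l ∈ range (p * m), f l * ζ ^ l = 0 := by
  rcases m.eq_zero_or_pos with rfl | hm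
  · simp
  have hζm : IsPrimitiveRoot (ζ ^ m) p := by
    simpa [Nat.mul_div_cancel p hm] using hζ.pow_of_dvd hm.ne' (dvd_mul_left m p)
  have hperiodic : ∀ s < p, ∀ r < m, f (r + s * m) = f r := fun s hs r hr => by
    rw [hf _ (by nlinarith), Nat.add_mul_mod_self_right, Nat.mod_eq_of_lt hr]
  calc ∑ l ∈ range (p * m), f l * ζ ^ l
      = ∑ s ∈ range p, ∑ r ∈ range m, f (r + s * m) * ζ ^ (r + s * m) :=
        sum_range_mul_eq_sum_sum _ p m
    _ = ∑ s ∈ range p, (ζ ^ m) ^ s * ∑ r ∈ range m, f r * ζ ^ r := by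
        refine sum_congr rfl fun s hs => ?_
        rw [mul_sum]
        refine sum_congr rfl fun r hr => ?_
        rw [hperiodic s (mem_range.1 hs) r (mem_range.1 hr), pow_add, ← pow_mul, Nat.mul_comm]
        ring
    _ = 0 := by rw [← sum_mul, hζm.geom_sum_eq_zero hp, zero_mul]

theorem Complex.isPrimitiveRoot_exp_neg_two_pi_I_mul_div (N : ℕ) (hN : N ≠ 0) (q : ℤ) :
    IsPrimitiveRoot (Complex.exp (-(2 * Real.pi * Complex.I * q) / N)) (N / Int.gcd N q) := by
  have hK : 0 < Int.gcd N q := Int.gcd_pos_of_ne_zero_left q (by exact_mod_cast hN)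
  have hcop : (-(q / Int.gcd N q)).gcd ((N / Int.gcd N q : ℕ) : ℤ) = 1 := by
    rw [Int.neg_gcd, Int.gcd_comm, Int.natCast_div]
    exact Int.gcd_div_gcd_div_gcd hK
  obtain ⟨M, hM⟩ : Int.gcd N q ∣ N := Int.natCast_dvd_natCast.mp (Int.gcd_dvd_left _ _)
  obtain ⟨q', hq'⟩ := Int.gcd_dvd_right (N : ℤ) q
  generalize Int.gcd N q = K at *
  subst hM hq'
  have hM0 : M ≠ 0 := by rintro rfl; exact hN (mul_zero K)
  rw [Int.mul_ediv_cancel_left _ (by exact_mod_cast hK.ne'), Nat.mul_div_cancel_left _ hK] at hcop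
  rw [Nat.mul_div_cancel_left _ hK]
  have hω : Complex.exp (-(2 * Real.pi * Complex.I * (K * q' : ℤ)) / (K * M : ℕ))
      = Complex.exp (2 * Real.pi * Complex.I / M) ^ (-q') := by
    have hK0 : (K : ℂ) ≠ 0 := by exact_mod_cast hK.ne'
    rw [← Complex.exp_int_mul]
    push_cast
    field_simp
  rw [hω]
  exact (Complex.isPrimitiveRoot_exp M hM0).zpow_of_gcd_eq_one _ hcop

theorem cyclic_folded_solution_general (N : ℕ) (hN : 1 ≤ N) (q : ℤ)
    (K : ℕ) (hK : K = Int.gcd (N : ℤ) q)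
    (p : ℕ) (hp : p.Prime) (hpd : p ∣ N / K)
    (n : Fin N → ℤ)
    (y : ℕ → ℤ) (hy : ∀ l, y l = ∑ k ∈ Finset.range K, pad n (l + k * (N / K)))
    (h : ∀ l < N / K, y l = y (l % (N / (K * p)))) :
    ∑ j : Fin N, (n j : ℂ) *
      Complex.exp (-(2 * (Real.pi : ℂ) * Complex.I * (q : ℂ) * ((j : ℕ) : ℂ)) / (N : ℂ)) = 0 := by
  have hω := Complex.isPrimitiveRoot_exp_neg_two_pi_I_mul_div N (by omega) q
  rw [← hK] at hω
  set ω := Complex.exp (-(2 * Real.pi * Complex.I * q) / N)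
  have hNK : N = K * (N / K) :=
    (Nat.mul_div_cancel' (hK ▸ Int.natCast_dvd_natCast.mp (Int.gcd_dvd_left _ _))).symm
  obtain ⟨m, hm⟩ := hpd
  have hmK : N / (K * p) = m := by
    rw [← Nat.div_div_eq_div_mul, hm, Nat.mul_div_cancel_left _ hp.pos]
  calc ∑ j : Fin N, (n j : ℂ) * Complex.exp (-(2 * Real.pi * Complex.I * q * (j : ℕ)) / N)
      = ∑ j ∈ range N, ((pad n j : ℤ) : ℂ) * ω ^ j := by
        rw [← Fin.sum_univ_eq_sum_range]
        refine sum_congr rfl fun j _ => ?_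
        rw [pad, dif_pos j.isLt, ← Complex.exp_nat_mul]
        congr 2
        ring
    _ = ∑ l ∈ range (N / K), ((y l : ℤ) : ℂ) * ω ^ l := by
        rw [show range N = range (K * (N / K)) by rw [← hNK],
          sum_range_mul_pow_eq_sum_fold hω.pow_eq_one]
        simp only [hy, Int.cast_sum]
    _ = 0 := by
        rw [hm] at hω h ⊢
        exact hω.sum_range_mul_pow_eq_zero_of_periodic hp.one_lt _ fun l hl => by
          rw [h l hl, hmK]

theorem cyclic_folded_solution (N : ℕ) (hN : 1 ≤ N) (q : ℤ)
    (K : ℕ) (hK : K = Int.gcd (N : ℤ) q) (hK1 : 1 < K)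
    (p : ℕ) (hp : p.Prime) (hpd : p ∣ N / K)
    (n : Fin N → ℤ)
    (y : ℕ → ℤ) (hy : ∀ l, y l = ∑ k ∈ Finset.range K, pad n (l + k * (N / K)))
    (h : ∀ l < N / K, y l = y (l % (N / (K * p)))) :
    ∑ j : Fin N, (n j : ℂ) *
      Complex.exp (-(2 * (Real.pi : ℂ) * Complex.I * (q : ℂ) * ((j : ℕ) : ℂ)) / (N : ℂ)) = 0 :=
  cyclic_folded_solution_general N hN q K hK p hp hpd n y hy h
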